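/- arXiv:1706.02880 — 5 statements merged into one kernel-verified Lean document; each statement's English description precedes it below -/
import Mathlib

section
/- Let 0 < κ₁ < κ₀ < 1, t₁ ∈ (0,σ), and define λ* := (κ₀ - κ₁)/(g₊(κ₁,κ₀) ∫₀^{t₁} A⁺(0,ξ) dξ), where g₊(κ₁,κ₀) := min_{s∈[κ₁,κ₀]} g(s) > 0 and A⁺(0,t) := ∫₀ᵗ a⁺(ξ) dξ, and assume ∫₀^{t₁} A⁺(0,ξ) dξ > 0. Let 0 < γ₁ ≤ (κ₀ - κ₁)/t₁. Then for every λ > λ*, the solution (x,y) of x' = y, y' = -λ a⁺(t) g(x) with x(0) = κ₀, y(0) = 0 satisfies x(t₁) < κ₁ and y(t₁) < -γ₁. -/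
/-!
Since `a ≥ 0` and `g ≥ 0`, the velocity `y` is nonincreasing, hence nonpositive, and so `x` is
nonincreasing as well. If `x(t₁) ≥ κ₁`, then `x` stays in `[κ₁, κ₀]` on `[0, t₁]`, the forcing
satisfies `g(x) ≥ g₊(κ₁, κ₀)`, and integrating twice gives
`x(t₁) ≤ κ₀ - λ g₊(κ₁, κ₀) ∫₀^{t₁} A⁺(0,ξ) dξ < κ₁` because `λ > λ*`. Finally, as `x` is concave,
`y(t₁)` lies below the secant slope `(x(t₁) - κ₀)/t₁ < -(κ₀ - κ₁)/t₁ ≤ -γ₁`.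
-/

open MeasureTheory Set

theorem monotoneOn_primitive_of_nonneg {f : ℝ → ℝ} {a b : ℝ} (hf : IntegrableOn f (Icc a b))
    (hf0 : ∀ t ∈ Icc a b, 0 ≤ f t) : MonotoneOn (fun t => ∫ s in a..t, f s) (Icc a b) := by
  intro s hs t ht hst
  refine intervalIntegral.integral_mono_interval le_rfl hs.1 hst
    ((ae_restrict_mem measurableSet_Ioc).mono fun u hu => hf0 u ⟨hu.1.le, hu.2.trans ht.2⟩) ?_
  exact (hf.mono_set (uIcc_subset_Icc (left_mem_Icc.2 (hs.1.trans hs.2)) ht)).intervalIntegrable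

theorem antitoneOn_of_eq_add_primitive {x y : ℝ → ℝ} {a b : ℝ} (hyi : IntegrableOn y (Icc a b))
    (hy0 : ∀ t ∈ Icc a b, y t ≤ 0) (hx : ∀ t ∈ Icc a b, x t = x a + ∫ s in a..t, y s) :
    AntitoneOn x (Icc a b) := by
  intro s hs t ht hst
  have := monotoneOn_primitive_of_nonneg hyi.neg (fun u hu => neg_nonneg.2 (hy0 u hu)) hs ht hst
  simp only [Pi.neg_apply, intervalIntegral.integral_neg] at this
  rw [hx s hs, hx t ht]
  linarith

theorem antitoneOn_of_eq_sub_mul_primitive {y F : ℝ → ℝ} {a b c : ℝ} (hc : 0 ≤ c)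
    (hFi : IntegrableOn F (Icc a b)) (hF0 : ∀ t ∈ Icc a b, 0 ≤ F t)
    (hy : ∀ t ∈ Icc a b, y t = y a - c * ∫ s in a..t, F s) : AntitoneOn y (Icc a b) := by
  intro s hs t ht hst
  rw [hy s hs, hy t ht]
  exact sub_le_sub_left
    (mul_le_mul_of_nonneg_left (monotoneOn_primitive_of_nonneg hFi hF0 hs ht hst) hc) _

theorem sub_mul_le_integral_of_antitoneOn {y : ℝ → ℝ} {a b : ℝ} (hab : a ≤ b)
    (hy : AntitoneOn y (Icc a b)) : (b - a) * y b ≤ ∫ s in a..b, y s := by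
  have hyi : IntervalIntegrable y volume a b :=
    AntitoneOn.intervalIntegrable (by rwa [uIcc_of_le hab])
  calc (b - a) * y b = ∫ _ in a..b, y b := by rw [intervalIntegral.integral_const, smul_eq_mul]
    _ ≤ ∫ s in a..b, y s :=
      intervalIntegral.integral_mono_on hab intervalIntegrable_const hyi fun s hs =>
        hy hs (right_mem_Icc.2 hab) hs.2

theorem const_mul_integral_le_integral_mul {a b : ℝ → ℝ} {t m : ℝ} (ht : 0 ≤ t)
    (ha0 : ∀ s ∈ Icc 0 t, 0 ≤ a s) (hai : IntegrableOn a (Icc 0 t))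
    (habi : IntegrableOn (fun s => a s * b s) (Icc 0 t)) (hb : ∀ s ∈ Icc 0 t, m ≤ b s) :
    m * ∫ s in 0..t, a s ≤ ∫ s in 0..t, a s * b s := by
  rw [← intervalIntegral.integral_const_mul]
  refine intervalIntegral.integral_mono_on ht ?_ ?_ fun s hs => ?_
  · exact (intervalIntegrable_iff_integrableOn_Icc_of_le ht).2 (hai.const_mul m)
  · exact (intervalIntegrable_iff_integrableOn_Icc_of_le ht).2 habi
  · nlinarith [ha0 s hs, hb s hs]

theorem integral_le_of_forcing_ge {a b y : ℝ → ℝ} {t c m : ℝ} (ht : 0 ≤ t) (hc : 0 ≤ c)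
    (ha0 : ∀ s ∈ Icc 0 t, 0 ≤ a s) (hai : IntegrableOn a (Icc 0 t))
    (habi : IntegrableOn (fun s => a s * b s) (Icc 0 t)) (hb : ∀ s ∈ Icc 0 t, m ≤ b s)
    (hyi : IntegrableOn y (Icc 0 t))
    (hy : ∀ s ∈ Icc 0 t, y s = y 0 - c * ∫ u in 0..s, a u * b u) :
    ∫ s in 0..t, y s ≤ t * y 0 - c * m * ∫ s in 0..t, ∫ u in 0..s, a u := by
  have hA : ContinuousOn (fun s => ∫ u in 0..s, a u) (uIcc 0 t) :=
    intervalIntegral.continuousOn_primitive_interval (by rwa [uIcc_of_le ht])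
  have hbound : ∀ s ∈ Icc 0 t, y s ≤ y 0 - c * m * ∫ u in 0..s, a u := fun s hs => by
    have hsub : Icc 0 s ⊆ Icc 0 t := Icc_subset_Icc_right hs.2
    have := const_mul_integral_le_integral_mul hs.1 (fun u hu => ha0 u (hsub hu))
      (hai.mono_set hsub) (habi.mono_set hsub) (fun u hu => hb u (hsub hu))
    rw [hy s hs, mul_assoc]
    exact sub_le_sub_left (mul_le_mul_of_nonneg_left this hc) _
  calc ∫ s in 0..t, y s ≤ ∫ s in 0..t, (y 0 - c * m * ∫ u in 0..s, a u) :=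
        intervalIntegral.integral_mono_on ht
          ((intervalIntegrable_iff_integrableOn_Icc_of_le ht).2 hyi)
          (intervalIntegrable_const.sub (hA.intervalIntegrable.const_mul _)) hbound
    _ = t * y 0 - c * m * ∫ s in 0..t, ∫ u in 0..s, a u := by
      rw [intervalIntegral.integral_sub intervalIntegrable_const
          (hA.intervalIntegrable.const_mul _), intervalIntegral.integral_const,
        intervalIntegral.integral_const_mul, sub_zero, smul_eq_mul]

theorem stmt2_general (σ t₁ κ₀ κ₁ γ₁ lam : ℝ) (a g x y : ℝ → ℝ)
    (hκκ : κ₁ < κ₀)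
    (ht₁ : t₁ ∈ Ioo 0 σ)
    (ha0 : ∀ t ∈ Icc 0 σ, 0 ≤ a t)
    (haint : IntegrableOn a (Icc 0 σ))
    (hgcont : Continuous g) (hgnn : ∀ s, 0 ≤ g s)
    (hgmin : 0 < sInf (g '' Icc κ₁ κ₀))
    (hIpos : 0 < ∫ t in (0:ℝ)..t₁, (∫ s in (0:ℝ)..t, a s))
    (hγle : γ₁ ≤ (κ₀ - κ₁) / t₁)
    (hlam : lam >
      (κ₀ - κ₁) / (sInf (g '' Icc κ₁ κ₀) * ∫ t in (0:ℝ)..t₁, (∫ s in (0:ℝ)..t, a s)))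
    (hcx : ContinuousOn x (Icc 0 σ))
    (hx : ∀ t ∈ Icc 0 σ, x t = x 0 + ∫ s in (0:ℝ)..t, y s)
    (hy : ∀ t ∈ Icc 0 σ, y t = y 0 - lam * ∫ s in (0:ℝ)..t, a s * g (x s))
    (hx0 : x 0 = κ₀) (hy0 : y 0 = 0) :
    x t₁ < κ₁ ∧ y t₁ < -γ₁ := by
  obtain ⟨ht₁0, ht₁σ⟩ := ht₁
  have ht₁mem : t₁ ∈ Icc 0 σ := ⟨ht₁0.le, ht₁σ.le⟩
  have hsub : Icc 0 t₁ ⊆ Icc 0 σ := Icc_subset_Icc_right ht₁σ.le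
  set m := sInf (g '' Icc κ₁ κ₀)
  set I := ∫ t in (0:ℝ)..t₁, (∫ s in (0:ℝ)..t, a s)
  have hlamI : κ₀ - κ₁ < lam * m * I := by
    rw [gt_iff_lt, div_lt_iff₀ (mul_pos hgmin hIpos)] at hlam; linarith
  have hlam0 : 0 < lam := (div_pos (sub_pos.2 hκκ) (mul_pos hgmin hIpos)).trans hlam
  have hF : IntegrableOn (fun s => a s * g (x s)) (Icc 0 σ) :=
    haint.mul_continuousOn (hgcont.comp_continuousOn hcx) isCompact_Icc
  have hy_anti : AntitoneOn y (Icc 0 σ) := antitoneOn_of_eq_sub_mul_primitive hlam0.le hF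
    (fun t ht => mul_nonneg (ha0 t ht) (hgnn _)) hy
  have hyi : IntegrableOn y (Icc 0 σ) := hy_anti.integrableOn_isCompact isCompact_Icc
  have hx_anti : AntitoneOn x (Icc 0 σ) :=
    antitoneOn_of_eq_add_primitive hyi
      (fun t ht => hy0 ▸ hy_anti (left_mem_Icc.2 (ht.1.trans ht.2)) ht ht.1) hx
  have hxt₁ : x t₁ < κ₁ := by
    by_contra! hκ₁le
    have hgm : ∀ s ∈ Icc 0 t₁, m ≤ g (x s) := fun s hs =>
      csInf_le ⟨0, forall_mem_image.2 fun u _ => hgnn u⟩ (mem_image_of_mem g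
        ⟨hκ₁le.trans (hx_anti (hsub hs) ht₁mem hs.2),
          hx0 ▸ hx_anti (left_mem_Icc.2 (ht₁0.le.trans ht₁σ.le)) (hsub hs) hs.1⟩)
    have := integral_le_of_forcing_ge ht₁0.le hlam0.le (fun s hs => ha0 s (hsub hs))
      (haint.mono_set hsub) (hF.mono_set hsub) hgm (hyi.mono_set hsub)
      (fun s hs => hy s (hsub hs))
    rw [hy0, mul_zero, zero_sub] at this
    linarith [hx t₁ ht₁mem]
  refine ⟨hxt₁, lt_of_mul_lt_mul_left ?_ ht₁0.le⟩
  have hsecant := sub_mul_le_integral_of_antitoneOn ht₁0.le (hy_anti.mono hsub)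
  rw [le_div_iff₀ ht₁0] at hγle
  rw [sub_zero] at hsecant
  linarith [hx t₁ ht₁mem]

/-- Lemma 2.2: for `λ > λ* = (κ₀-κ₁)/(g₊(κ₁,κ₀) ∫₀^{t₁} A⁺(0,ξ) dξ)` and
`0 < γ₁ ≤ (κ₀-κ₁)/t₁`, the solution of `x' = y, y' = -λ a⁺(t) g(x)` with
`x(0) = κ₀, y(0) = 0` satisfies `x(t₁) < κ₁` and `y(t₁) < -γ₁`. -/
theorem stmt2 (σ t₁ κ₀ κ₁ γ₁ lam : ℝ) (a g x y : ℝ → ℝ)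
    (hκ₁ : 0 < κ₁) (hκκ : κ₁ < κ₀) (hκ₀ : κ₀ < 1)
    (ht₁ : t₁ ∈ Ioo 0 σ)
    (ha0 : ∀ t ∈ Icc 0 σ, 0 ≤ a t)
    (haint : IntegrableOn a (Icc 0 σ))
    (hApos : ∀ t ∈ Ioc (0:ℝ) σ, 0 < ∫ s in (0:ℝ)..t, a s)
    (hgcont : Continuous g) (hgnn : ∀ s, 0 ≤ g s)
    (hg0 : g 0 = 0) (hg1 : g 1 = 0) (hgpos : ∀ s : ℝ, 0 < s → s < 1 → 0 < g s)
    (hgmin : 0 < sInf (g '' Icc κ₁ κ₀))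
    (hIpos : 0 < ∫ t in (0:ℝ)..t₁, (∫ s in (0:ℝ)..t, a s))
    (hγpos : 0 < γ₁) (hγle : γ₁ ≤ (κ₀ - κ₁) / t₁)
    (hlam : lam >
      (κ₀ - κ₁) / (sInf (g '' Icc κ₁ κ₀) * ∫ t in (0:ℝ)..t₁, (∫ s in (0:ℝ)..t, a s)))
    (hcx : ContinuousOn x (Icc 0 σ)) (hcy : ContinuousOn y (Icc 0 σ))
    (hx : ∀ t ∈ Icc 0 σ, x t = x 0 + ∫ s in (0:ℝ)..t, y s)
    (hy : ∀ t ∈ Icc 0 σ, y t = y 0 - lam * ∫ s in (0:ℝ)..t, a s * g (x s))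
    (hx0 : x 0 = κ₀) (hy0 : y 0 = 0) :
    x t₁ < κ₁ ∧ y t₁ < -γ₁ :=
  stmt2_general σ t₁ κ₀ κ₁ γ₁ lam a g x y hκκ ht₁ ha0 haint hgcont hgnn hgmin hIpos hγle hlam hcx hx
    hy hx0 hy0
end

section
/- Let λ > 0 and ν ∈ (0,π/2), and suppose a⁺ ∈ L^∞(0,σ). Choose ε̂ > 0 such that arctan(√(λ‖a⁺‖_∞ ε) · tan(σ√(λ‖a⁺‖_∞ ε))) < ν for all ε ∈ (0,ε̂). Then for each ε ∈ (0,ε̂) there exists δ_ε ∈ (0,1) with g(s) ≤ εs on [0,δ_ε], and for every κ ∈ (0,δ_ε], the solution (x,y) of x' = y, y' = -λ a⁺(t) g(x) with x(0) = κ, y(0) = 0 satisfies -ν ≤ arctan(y(t)/x(t)) ≤ 0 for all t ∈ [0,σ]; in particular x(t) > 0 on [0,σ]. -/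
/-!
While `0 ≤ x ≤ δ` the nonlinear force is dominated by a linear one, `λ a⁺ g(x) ≤ ω² x` with
`ω = √(λ M ε)`, `M` a bound for `a⁺`. Since `ω tan (σ ω)` blows up as `σ ω ↑ π/2`, the choice
of `ε̂` forces `σ ω < π/2`, so `cos (ω t) > 0` on `[0, σ]`. A Sturm comparison with `cos (ω t)`
(the Wronskian `y cos (ω t) + ω x sin (ω t)` vanishes at `0` and is nondecreasing) gives
`y ≥ -ω tan (σ ω) x`, which bounds the angle from below by `-arctan (ω tan (σ ω)) > -ν`; then
`(x e^{K t})' ≥ 0` with `K = ω tan (σ ω)` keeps `x` positive. The angle stays `≤ 0` because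
`y' ≤ 0`.
-/

open MeasureTheory Set Real Filter Topology

theorem tendsto_arctan_div_mul_tan {σ : ℝ} (hσ : 0 < σ) :
    Tendsto (fun θ => arctan (θ / σ * tan θ)) (𝓝[<] (π / 2)) (𝓝 (π / 2)) := by
  have hdiv : Tendsto (fun θ => θ / σ) (𝓝[<] (π / 2)) (𝓝 (π / 2 / σ)) :=
    ((continuous_id.div_const σ).tendsto _).mono_left nhdsWithin_le_nhds
  exact (tendsto_arctan_atTop.comp
    (hdiv.pos_mul_atTop (by positivity) tendsto_tan_pi_div_two)).mono_right nhdsWithin_le_nhds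

theorem mul_sqrt_lt_pi_div_two_of_arctan_lt {σ ν c ε : ℝ} (hσ : 0 < σ) (hν : ν < π / 2)
    (hε : 0 < ε) (h : ∀ ε' ∈ Ioo 0 ε, arctan (√(c * ε') * tan (σ * √(c * ε'))) < ν) :
    σ * √(c * ε) < π / 2 := by
  by_contra! hge
  set r := √(c * ε)
  have hr : 0 < r := pos_of_mul_pos_right (pi_div_two_pos.trans_le hge) hσ.le
  have hcε : c * ε = r ^ 2 := (sq_sqrt (sqrt_pos.1 hr).le).symm
  obtain ⟨θ, hθν, hθ0, hθ⟩ : ∃ θ, ν < arctan (θ / σ * tan θ) ∧ 0 < θ ∧ θ < π / 2 :=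
    (((tendsto_arctan_div_mul_tan hσ).eventually (lt_mem_nhds hν)).and
      ((lt_mem_nhds pi_div_two_pos).filter_mono nhdsWithin_le_nhds |>.and
        self_mem_nhdsWithin)).exists
  set ε' := ε * (θ / (σ * r)) ^ 2
  have hθr : θ / (σ * r) < 1 := (div_lt_one (by positivity)).2 (hθ.trans_le hge)
  have hsqrt : √(c * ε') = θ / σ := by
    rw [show c * ε' = (θ / σ) ^ 2 by simp only [ε', ← mul_assoc, hcε]; field_simp]
    exact sqrt_sq (by positivity)
  have hε' : ε' ∈ Ioo 0 ε :=
    ⟨by positivity, mul_lt_of_lt_one_right hε (pow_lt_one₀ (by positivity) hθr two_ne_zero)⟩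
  have := h ε' hε'
  rw [hsqrt, mul_div_cancel₀ _ hσ.ne'] at this
  exact (hθν.trans this).false

theorem exists_le_mul_of_tendsto_div {g : ℝ → ℝ} {ε : ℝ}
    (hg : Tendsto (fun s => g s / s) (𝓝[>] 0) (𝓝 0)) (hg0 : g 0 ≤ 0) (hε : 0 < ε) :
    ∃ δ ∈ Ioo (0 : ℝ) 1, ∀ s ∈ Icc 0 δ, g s ≤ ε * s := by
  obtain ⟨u, hu, hsub⟩ := mem_nhdsGT_iff_exists_Ioc_subset.1 (hg.eventually (gt_mem_nhds hε))
  refine ⟨min u (1 / 2), ⟨lt_min hu (by norm_num), by norm_num [min_lt_iff]⟩, fun s hs => ?_⟩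
  rcases hs.1.eq_or_lt with rfl | hs0
  · simpa using hg0
  · have : g s / s < ε := hsub ⟨hs0, hs.2.trans (min_le_left _ _)⟩
    exact ((div_lt_iff₀ hs0).1 this).le

theorem hasDerivAt_of_eq_add_integral {x y : ℝ → ℝ} {a b κ u : ℝ}
    (hy : ContinuousOn y (Icc a b)) (hx : ∀ t ∈ Icc a b, x t = κ + ∫ s in a..t, y s)
    (hu : u ∈ Ioo a b) : HasDerivAt x (y u) u := by
  have hnhds : Icc a b ∈ 𝓝 u := Icc_mem_nhds hu.1 hu.2
  have hint : HasDerivAt (fun t => κ + ∫ s in a..t, y s) (y u) u :=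
    (intervalIntegral.integral_hasDerivAt_right
      ((hy.mono (Icc_subset_Icc_right hu.2.le)).intervalIntegrable_of_Icc hu.1.le)
      (hy.stronglyMeasurableAtFilter_nhdsWithin measurableSet_Icc u |>.filter_mono
        (by rw [nhdsWithin_eq_nhds.2 hnhds]))
      (hy.continuousAt hnhds)).const_add κ
  exact hint.congr_of_eventuallyEq (eventually_of_mem hnhds hx)

theorem mul_exp_le_mul_exp_of_add_mul_nonneg {x y : ℝ → ℝ} {K a b : ℝ} (hab : a ≤ b)
    (hxc : ContinuousOn x (Icc a b)) (hx : ∀ u ∈ Ioo a b, HasDerivAt x (y u) u)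
    (hy : ∀ u ∈ Ioo a b, 0 ≤ y u + K * x u) :
    x a * exp (K * a) ≤ x b * exp (K * b) := by
  have hexp (u : ℝ) : HasDerivAt (fun t => exp (K * t)) (exp (K * u) * K) u := by
    simpa using ((hasDerivAt_id u).const_mul K).exp
  refine monotoneOn_of_hasDerivWithinAt_nonneg (f := fun t => x t * exp (K * t))
    (f' := fun u => y u * exp (K * u) + x u * (exp (K * u) * K)) (convex_Icc a b)
    (hxc.mul (by fun_prop : Continuous fun t => exp (K * t)).continuousOn)
    (fun u hu => ?_) (fun u hu => ?_) (left_mem_Icc.2 hab) (right_mem_Icc.2 hab) hab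
  all_goals rw [interior_Icc] at hu
  · exact ((hx u hu).mul (hexp u)).hasDerivWithinAt
  · have := mul_nonneg (hy u hu) (exp_pos (K * u)).le
    linarith

theorem ContinuousOn.forall_pos_of_nonneg_Ico_imp_pos {x : ℝ → ℝ} {a b : ℝ}
    (hx : ContinuousOn x (Icc a b)) (h : ∀ T ∈ Icc a b, (∀ u ∈ Ico a T, 0 ≤ x u) → 0 < x T) :
    ∀ t ∈ Icc a b, 0 < x t := by
  by_contra! hneg
  set S := {t ∈ Icc a b | x t ≤ 0}
  have hS : IsClosed S := hx.preimage_isClosed_of_isClosed isClosed_Icc isClosed_Iic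
  have hbdd : BddBelow S := ⟨a, fun t ht => ht.1.1⟩
  obtain ⟨hmem, hle⟩ : sInf S ∈ S := hS.csInf_mem hneg hbdd
  refine (h _ hmem fun u hu => ?_).not_ge hle
  by_contra! hu'
  exact (csInf_le hbdd ⟨⟨hu.1, hu.2.le.trans hmem.2⟩, hu'.le⟩).not_gt hu.2

theorem wronskian_cos_nonneg {x y f : ℝ → ℝ} {κ ω t : ℝ} (hω : 0 ≤ ω) (ht : 0 ≤ t)
    (htω : ω * t ≤ π / 2) (hxc : ContinuousOn x (Icc 0 t)) (hyc : ContinuousOn y (Icc 0 t))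
    (hf : IntegrableOn f (Icc 0 t)) (hx : ∀ s ∈ Icc 0 t, x s = κ + ∫ r in 0..s, y r)
    (hy : ∀ s ∈ Icc 0 t, y s = -∫ r in 0..s, f r) (hfx : ∀ s ∈ Icc 0 t, f s ≤ ω ^ 2 * x s) :
    0 ≤ y t * cos (ω * t) + ω * sin (ω * t) * x t := by
  set z := fun s => ∫ r in 0..s, x r
  have hzc : ContinuousOn z (Icc 0 t) := by
    simpa only [uIcc_of_le ht] using intervalIntegral.continuousOn_primitive_interval
      (a := 0) (b := t) (by rw [uIcc_of_le ht]; exact hxc.integrableOn_Icc)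
  have hm : ∀ s ∈ Icc 0 t, 0 ≤ y s + ω ^ 2 * z s := by
    intro s hs
    have hsub : Icc 0 s ⊆ Icc 0 t := Icc_subset_Icc_right hs.2
    rw [hy s hs, ← intervalIntegral.integral_const_mul, neg_add_eq_sub,
      ← intervalIntegral.integral_sub
        (((hxc.mono hsub).intervalIntegrable_of_Icc hs.1).const_mul _)
        ((intervalIntegrable_iff_integrableOn_Icc_of_le hs.1).2 (hf.mono_set hsub))]
    exact intervalIntegral.integral_nonneg hs.1 fun r hr => sub_nonneg.2 (hfx r (hsub hr))
  -- `y` need not be differentiable, so the Wronskian is split as `(y + ω² z) cos (ω s) + φ s`: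
  -- the first summand is nonnegative and `φ' = ω sin (ω s) (y + ω² z) ≥ 0`.
  set φ := fun s => -ω ^ 2 * z s * cos (ω * s) + ω * sin (ω * s) * x s
  have hφ : MonotoneOn φ (Icc 0 t) := by
    refine monotoneOn_of_hasDerivWithinAt_nonneg
      (f' := fun s => ω * sin (ω * s) * (y s + ω ^ 2 * z s)) (convex_Icc 0 t) (by fun_prop) (fun s hs => ?_) (fun s hs => ?_)
    all_goals rw [interior_Icc] at hs
    · have hz : HasDerivAt z (x s) s :=
        hasDerivAt_of_eq_add_integral (κ := 0) hxc (fun r _ => (zero_add _).symm) hs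
      have hlin : HasDerivAt (fun r => ω * r) ω s := by simpa using (hasDerivAt_id s).const_mul ω
      have := ((hz.const_mul (-ω ^ 2)).mul (hlin.cos)).add
        ((hlin.sin.const_mul ω).mul (hasDerivAt_of_eq_add_integral hyc hx hs))
      exact (this.congr_deriv (by ring)).hasDerivWithinAt
    · refine mul_nonneg (mul_nonneg hω (sin_nonneg_of_nonneg_of_le_pi (mul_nonneg hω hs.1.le) ?_))
        (hm s (Ioo_subset_Icc_self hs))
      nlinarith [pi_pos, hs.2]
  have hφt : 0 ≤ φ t := by simpa [φ, z] using hφ (left_mem_Icc.2 ht) (right_mem_Icc.2 ht) ht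
  have hcos : 0 ≤ cos (ω * t) := cos_nonneg_of_mem_Icc ⟨by nlinarith [pi_pos], htω⟩
  calc 0 ≤ (y t + ω ^ 2 * z t) * cos (ω * t) + φ t :=
        add_nonneg (mul_nonneg (hm t (right_mem_Icc.2 ht)) hcos) hφt
    _ = y t * cos (ω * t) + ω * sin (ω * t) * x t := by ring

theorem pos_and_add_mul_tan_nonneg_of_le_sq_mul {x y f : ℝ → ℝ} {κ ω σ : ℝ} (hω : 0 ≤ ω)
    (hσω : σ * ω < π / 2) (hκ : 0 < κ) (hxc : ContinuousOn x (Icc 0 σ))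
    (hyc : ContinuousOn y (Icc 0 σ)) (hf : IntegrableOn f (Icc 0 σ))
    (hx : ∀ t ∈ Icc 0 σ, x t = κ + ∫ s in 0..t, y s)
    (hy : ∀ t ∈ Icc 0 σ, y t = -∫ s in 0..t, f s)
    (hfx : ∀ t ∈ Icc 0 σ, 0 ≤ x t → f t ≤ ω ^ 2 * x t) :
    ∀ t ∈ Icc 0 σ, 0 < x t ∧ 0 ≤ y t + ω * tan (σ * ω) * x t := by
  have hcone : ∀ t ∈ Icc 0 σ, (∀ u ∈ Icc 0 t, 0 ≤ x u) → 0 ≤ y t + ω * tan (σ * ω) * x t := by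
    intro t ht hnn
    have hsub : Icc 0 t ⊆ Icc 0 σ := Icc_subset_Icc_right ht.2
    have hωt : ω * t ≤ σ * ω := by nlinarith [ht.2]
    have hωt0 : 0 ≤ ω * t := mul_nonneg hω ht.1
    have hW := wronskian_cos_nonneg hω ht.1 (hωt.trans hσω.le) (hxc.mono hsub) (hyc.mono hsub)
      (hf.mono_set hsub) (fun s hs => hx s (hsub hs)) (fun s hs => hy s (hsub hs))
      (fun s hs => hfx s (hsub hs) (hnn s hs))
    have hcos : 0 < cos (ω * t) := cos_pos_of_mem_Ioo ⟨by linarith [pi_pos], hωt.trans_lt hσω⟩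
    have htan : tan (ω * t) ≤ tan (σ * ω) :=
      strictMonoOn_tan.monotoneOn ⟨by linarith [pi_pos], hωt.trans_lt hσω⟩
        ⟨by nlinarith [pi_pos], hσω⟩ hωt
    have hWt : 0 ≤ y t + ω * tan (ω * t) * x t := by
      rw [tan_eq_sin_div_cos, show y t + ω * (sin (ω * t) / cos (ω * t)) * x t
        = (y t * cos (ω * t) + ω * sin (ω * t) * x t) / cos (ω * t) by field_simp]
      exact div_nonneg hW hcos.le
    nlinarith [mul_le_mul_of_nonneg_right (mul_le_mul_of_nonneg_left htan hω)
      (hnn t ⟨ht.1, le_rfl⟩)]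
  have hpos : ∀ t ∈ Icc 0 σ, 0 < x t := by
    refine hxc.forall_pos_of_nonneg_Ico_imp_pos fun T hT hnn => ?_
    have hx0 : x 0 = κ := by simpa using hx 0 ⟨le_rfl, hT.1.trans hT.2⟩
    have := mul_exp_le_mul_exp_of_add_mul_nonneg hT.1 (hxc.mono (Icc_subset_Icc_right hT.2))
      (fun u hu => hasDerivAt_of_eq_add_integral hyc hx ⟨hu.1, hu.2.trans_le hT.2⟩)
      (fun u hu => hcone u ⟨hu.1.le, hu.2.le.trans hT.2⟩ fun v hv =>
        hnn v ⟨hv.1, hv.2.trans_lt hu.2⟩)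
    rw [hx0, mul_zero, exp_zero, mul_one] at this
    exact pos_of_mul_pos_left (hκ.trans_le this) (exp_pos _).le
  exact fun t ht => ⟨hpos t ht, hcone t ht fun u hu => (hpos u ⟨hu.1, hu.2.trans ht.2⟩).le⟩

theorem ode_solution_pos_and_bounds {σ lam M ε δ κ : ℝ} {a g x y : ℝ → ℝ} (hlam : 0 ≤ lam)
    (hM : 0 ≤ M) (hε : 0 ≤ ε) (hσω : σ * √(lam * M * ε) < π / 2)
    (ha0 : ∀ t ∈ Icc 0 σ, 0 ≤ a t) (haM : ∀ t ∈ Icc 0 σ, a t ≤ M)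
    (haint : IntegrableOn a (Icc 0 σ)) (hgcont : Continuous g) (hgnn : ∀ s, 0 ≤ g s)
    (hgδ : ∀ s ∈ Icc 0 δ, g s ≤ ε * s) (hκ : κ ∈ Ioc 0 δ) (hxc : ContinuousOn x (Icc 0 σ))
    (hyc : ContinuousOn y (Icc 0 σ)) (hx : ∀ t ∈ Icc 0 σ, x t = κ + ∫ s in 0..t, y s)
    (hy : ∀ t ∈ Icc 0 σ, y t = -lam * ∫ s in 0..t, a s * g (x s)) :
    ∀ t ∈ Icc 0 σ, 0 < x t ∧ 0 ≤ y t + √(lam * M * ε) * tan (σ * √(lam * M * ε)) * x t ∧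
      y t ≤ 0 := by
  set f := fun s => lam * (a s * g (x s))
  have hf : IntegrableOn f (Icc 0 σ) :=
    (haint.mul_continuousOn (hgcont.comp_continuousOn hxc) isCompact_Icc).const_mul lam
  have hy' : ∀ t ∈ Icc 0 σ, y t = -∫ s in 0..t, f s := fun t ht => by
    rw [hy t ht, intervalIntegral.integral_const_mul, neg_mul]
  have hy_nonpos : ∀ t ∈ Icc 0 σ, y t ≤ 0 := fun t ht => by
    rw [hy' t ht, neg_nonpos]
    exact intervalIntegral.integral_nonneg ht.1 fun s hs =>
      mul_nonneg hlam (mul_nonneg (ha0 s ⟨hs.1, hs.2.trans ht.2⟩) (hgnn _))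
  have hx_le : ∀ t ∈ Icc 0 σ, x t ≤ κ := fun t ht => by
    have := intervalIntegral.integral_mono_on ht.1
      ((hyc.mono (Icc_subset_Icc_right ht.2)).intervalIntegrable_of_Icc ht.1)
      (intervalIntegrable_const (μ := volume)) fun s hs => hy_nonpos s ⟨hs.1, hs.2.trans ht.2⟩
    rw [intervalIntegral.integral_zero] at this
    linarith [hx t ht]
  have hfx : ∀ t ∈ Icc 0 σ, 0 ≤ x t → f t ≤ √(lam * M * ε) ^ 2 * x t := by
    intro t ht hxt
    have hg := hgδ (x t) ⟨hxt, (hx_le t ht).trans hκ.2⟩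
    rw [sq_sqrt (by positivity), mul_assoc, mul_assoc]
    exact mul_le_mul_of_nonneg_left (mul_le_mul (haM t ht) hg (hgnn _) hM) hlam
  have := pos_and_add_mul_tan_nonneg_of_le_sq_mul (sqrt_nonneg _) hσω hκ.1 hxc hyc hf hx hy' hfx
  exact fun t ht => ⟨(this t ht).1, (this t ht).2, hy_nonpos t ht⟩

theorem stmt3_general (σ lam ν M εhat : ℝ) (a g : ℝ → ℝ)
    (hσ : 0 < σ) (hlam : 0 < lam) (hν : ν ∈ Ioo 0 (Real.pi / 2))
    (ha0 : ∀ t ∈ Icc 0 σ, 0 ≤ a t) (haM : ∀ t ∈ Icc 0 σ, a t ≤ M)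
    (haint : IntegrableOn a (Icc 0 σ))
    (hgcont : Continuous g) (hgnn : ∀ s, 0 ≤ g s)
    (hgneg : ∀ s : ℝ, s ≤ 0 → g s = 0)
    (hglim : Filter.Tendsto (fun s => g s / s) (nhdsWithin 0 (Ioi 0)) (nhds 0))
    (hεcond : ∀ ε ∈ Ioo (0:ℝ) εhat,
      Real.arctan (Real.sqrt (lam * M * ε) * Real.tan (σ * Real.sqrt (lam * M * ε))) < ν) :
    ∀ ε ∈ Ioo (0:ℝ) εhat, ∃ δ ∈ Ioo (0:ℝ) 1,
      (∀ s ∈ Icc (0:ℝ) δ, g s ≤ ε * s) ∧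
      ∀ κ ∈ Ioc (0:ℝ) δ, ∀ x y : ℝ → ℝ,
        ContinuousOn x (Icc 0 σ) → ContinuousOn y (Icc 0 σ) →
        (∀ t ∈ Icc 0 σ, x t = κ + ∫ s in (0:ℝ)..t, y s) →
        (∀ t ∈ Icc 0 σ, y t = -lam * ∫ s in (0:ℝ)..t, a s * g (x s)) →
        ∀ t ∈ Icc 0 σ,
          0 < x t ∧ -ν ≤ Real.arctan (y t / x t) ∧ Real.arctan (y t / x t) ≤ 0 := by
  intro ε hε
  obtain ⟨δ, hδ, hgδ⟩ := exists_le_mul_of_tendsto_div hglim (hgneg 0 le_rfl).le hε.1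
  refine ⟨δ, hδ, hgδ, fun κ hκ x y hxc hyc hx hy t ht => ?_⟩
  have hM : 0 ≤ M := (ha0 0 ⟨le_rfl, hσ.le⟩).trans (haM 0 ⟨le_rfl, hσ.le⟩)
  have hσω := mul_sqrt_lt_pi_div_two_of_arctan_lt hσ hν.2 hε.1 fun ε' hε' =>
    hεcond ε' ⟨hε'.1, hε'.2.trans hε.2⟩
  obtain ⟨hxt, hcone, hyt⟩ := ode_solution_pos_and_bounds hlam.le hM hε.1.le hσω ha0 haM haint
    hgcont hgnn hgδ hκ hxc hyc hx hy t ht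
  refine ⟨hxt, ?_, arctan_le_zero.2 (div_nonpos_of_nonpos_of_nonneg hyt hxt.le)⟩
  calc -ν ≤ -arctan (√(lam * M * ε) * tan (σ * √(lam * M * ε))) := by linarith [hεcond ε hε]
    _ = arctan (-(√(lam * M * ε) * tan (σ * √(lam * M * ε)))) := (arctan_neg _).symm
    _ ≤ arctan (y t / x t) := arctan_strictMono.monotone ((le_div_iff₀ hxt).2 (by linarith))

/-- Lemma 2.3: small-amplitude angular estimate.  For `λ > 0`, `ν ∈ (0,π/2)`,
`a⁺ ∈ L^∞(0,σ)` with bound `M`, and `ε̂` chosen so that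
`arctan(√(λMε) tan(σ√(λMε))) < ν` for all `ε ∈ (0,ε̂)`, for each `ε ∈ (0,ε̂)`
there is `δ_ε ∈ (0,1)` with `g(s) ≤ εs` on `[0,δ_ε]`, such that for every
`κ ∈ (0,δ_ε]` the solution of `x' = y, y' = -λ a⁺(t) g(x)`, `x(0)=κ, y(0)=0`,
satisfies `-ν ≤ arctan(y/x) ≤ 0` on `[0,σ]`; in particular `x > 0` there. -/
theorem stmt3 (σ lam ν M εhat : ℝ) (a g : ℝ → ℝ)
    (hσ : 0 < σ) (hlam : 0 < lam) (hν : ν ∈ Ioo 0 (Real.pi / 2))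
    (ha0 : ∀ t ∈ Icc 0 σ, 0 ≤ a t) (haM : ∀ t ∈ Icc 0 σ, a t ≤ M)
    (haint : IntegrableOn a (Icc 0 σ))
    (hgcont : Continuous g) (hgnn : ∀ s, 0 ≤ g s)
    (hgneg : ∀ s : ℝ, s ≤ 0 → g s = 0)
    (hglim : Filter.Tendsto (fun s => g s / s) (nhdsWithin 0 (Ioi 0)) (nhds 0))
    (hεhat : 0 < εhat)
    (hεcond : ∀ ε ∈ Ioo (0:ℝ) εhat,
      Real.arctan (Real.sqrt (lam * M * ε) * Real.tan (σ * Real.sqrt (lam * M * ε))) < ν) :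
    ∀ ε ∈ Ioo (0:ℝ) εhat, ∃ δ ∈ Ioo (0:ℝ) 1,
      (∀ s ∈ Icc (0:ℝ) δ, g s ≤ ε * s) ∧
      ∀ κ ∈ Ioc (0:ℝ) δ, ∀ x y : ℝ → ℝ,
        ContinuousOn x (Icc 0 σ) → ContinuousOn y (Icc 0 σ) →
        (∀ t ∈ Icc 0 σ, x t = κ + ∫ s in (0:ℝ)..t, y s) →
        (∀ t ∈ Icc 0 σ, y t = -lam * ∫ s in (0:ℝ)..t, a s * g (x s)) →
        ∀ t ∈ Icc 0 σ,
          0 < x t ∧ -ν ≤ Real.arctan (y t / x t) ∧ Real.arctan (y t / x t) ≤ 0 :=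
  stmt3_general σ lam ν M εhat a g hσ hlam hν ha0 haM haint hgcont hgnn hgneg hglim hεcond
end

section
/- Let 0 < κ₃ < κ_T < 1, t₃ ∈ (τ,T), define λ** := (κ_T - κ₃)/(g₊(κ₃,κ_T) ∫_{t₃}^{T} A⁺(ξ,T) dξ) with A⁺(t,T) := ∫_t^T a⁺(ξ)dξ and g₊(κ₃,κ_T) := min_{s∈[κ₃,κ_T]} g(s) > 0, assuming ∫_{t₃}^{T} A⁺(ξ,T)dξ > 0, and let 0 < γ₃ ≤ (κ_T - κ₃)/(T - t₃). Then for every λ > λ**, the solution (x,y) of x' = y, y' = -λ a⁺(t) g(x) with terminal conditions x(T) = κ_T, y(T) = 0 satisfies x(t₃) < κ₃ and y(t₃) > γ₃. -/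
/-!
Integrating the system from `T` gives `y t = λ ∫_t^T a⁺ g(x) ≥ 0` and `x t = κ_T - ∫_t^T y`, so on
`[t₃, T]` the velocity `y` is nonincreasing and `x` is nondecreasing. If `x t₃ ≥ κ₃`, then `x` stays
in `[κ₃, κ_T]` on `[t₃, T]`, hence `y ≥ λ g₊ A⁺` there and
`κ_T - x t₃ = ∫_{t₃}^T y ≥ λ g₊ ∫_{t₃}^T A⁺ > κ_T - κ₃`, a contradiction. Since `y` is nonincreasing,
`(T - t₃) y t₃ ≥ ∫_{t₃}^T y = κ_T - x t₃ > κ_T - κ₃ ≥ γ₃ (T - t₃)`.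
-/

open MeasureTheory Set intervalIntegral

lemma antitoneOn_integral_of_nonneg {f : ℝ → ℝ} {a b : ℝ} (hf : IntegrableOn f (Icc a b))
    (hf0 : ∀ t ∈ Icc a b, 0 ≤ f t) : AntitoneOn (fun t => ∫ s in t..b, f s) (Icc a b) := by
  intro s hs t ht hst
  refine integral_mono_interval hst ht.2 le_rfl ?_
    ((intervalIntegrable_iff_integrableOn_Icc_of_le hs.2).2 (hf.mono_set (Icc_subset_Icc_left hs.1)))
  exact (ae_restrict_iff' measurableSet_Ioc).2
    (ae_of_all _ fun u hu => hf0 u ⟨hs.1.trans hu.1.le, hu.2⟩)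

lemma antitoneOn_of_eq_mul_integral {f y : ℝ → ℝ} {a b lam : ℝ} (hlam : 0 ≤ lam)
    (hf : IntegrableOn f (Icc a b)) (hf0 : ∀ t ∈ Icc a b, 0 ≤ f t)
    (hy : ∀ t ∈ Icc a b, y t = lam * ∫ s in t..b, f s) : AntitoneOn y (Icc a b) :=
  fun s hs t ht hst => by
    rw [hy s hs, hy t ht]
    exact mul_le_mul_of_nonneg_left (antitoneOn_integral_of_nonneg hf hf0 hs ht hst) hlam

lemma monotoneOn_of_eq_sub_integral {x y : ℝ → ℝ} {a b c : ℝ} (hy : IntegrableOn y (Icc a b))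
    (hy0 : ∀ t ∈ Icc a b, 0 ≤ y t) (hx : ∀ t ∈ Icc a b, x t = c - ∫ s in t..b, y s) :
    MonotoneOn x (Icc a b) :=
  fun s hs t ht hst => by
    rw [hx s hs, hx t ht]
    exact sub_le_sub_left (antitoneOn_integral_of_nonneg hy hy0 hs ht hst) c

lemma AntitoneOn.integral_le_sub_mul {f : ℝ → ℝ} {a b : ℝ} (hab : a ≤ b)
    (hf : AntitoneOn f (Icc a b)) : ∫ t in a..b, f t ≤ (b - a) * f a := by
  have hfi : IntervalIntegrable f volume a b := (uIcc_of_le hab ▸ hf).intervalIntegrable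
  simpa using integral_mono_on hab hfi intervalIntegrable_const fun t ht => hf ⟨le_rfl, hab⟩ ht ht.1

lemma mul_integral_integral_le {a h : ℝ → ℝ} {t₀ b c : ℝ} (htb : t₀ ≤ b)
    (ha : IntegrableOn a (Icc t₀ b)) (hah : IntegrableOn (fun s => a s * h s) (Icc t₀ b))
    (ha0 : ∀ t ∈ Icc t₀ b, 0 ≤ a t) (hc : ∀ t ∈ Icc t₀ b, c ≤ h t) :
    c * ∫ t in t₀..b, ∫ s in t..b, a s ≤ ∫ t in t₀..b, ∫ s in t..b, a s * h s := by
  have hprim {f : ℝ → ℝ} (hf : IntegrableOn f (Icc t₀ b)) :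
      IntervalIntegrable (fun t => ∫ s in t..b, f s) volume t₀ b :=
    (continuousOn_primitive_interval_left (by rwa [uIcc_of_le htb])).intervalIntegrable
  have hsub {t : ℝ} (ht : t ∈ Icc t₀ b) {f : ℝ → ℝ} (hf : IntegrableOn f (Icc t₀ b)) :
      IntervalIntegrable f volume t b :=
    (intervalIntegrable_iff_integrableOn_Icc_of_le ht.2).2 (hf.mono_set (Icc_subset_Icc_left ht.1))
  rw [← intervalIntegral.integral_const_mul]
  refine integral_mono_on htb ((hprim ha).const_mul c) (hprim hah) fun t ht => ?_
  rw [← intervalIntegral.integral_const_mul]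
  refine integral_mono_on ht.2 ((hsub ht ha).const_mul c) (hsub ht hah) fun s hs => ?_
  have hs' : s ∈ Icc t₀ b := ⟨ht.1.trans hs.1, hs.2⟩
  rw [mul_comm]
  exact mul_le_mul_of_nonneg_left (hc s hs') (ha0 s hs')

lemma mul_integral_integral_le_integral {a h y : ℝ → ℝ} {t₀ b c lam : ℝ} (htb : t₀ ≤ b)
    (ha : IntegrableOn a (Icc t₀ b)) (hah : IntegrableOn (fun s => a s * h s) (Icc t₀ b))
    (ha0 : ∀ t ∈ Icc t₀ b, 0 ≤ a t) (hc : ∀ t ∈ Icc t₀ b, c ≤ h t) (hlam : 0 ≤ lam)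
    (hy : ∀ t ∈ Icc t₀ b, y t = lam * ∫ s in t..b, a s * h s) :
    lam * (c * ∫ t in t₀..b, ∫ s in t..b, a s) ≤ ∫ t in t₀..b, y t := by
  rw [intervalIntegral.integral_congr fun t ht => hy t (uIcc_of_le htb ▸ ht),
    intervalIntegral.integral_const_mul]
  exact mul_le_mul_of_nonneg_left (mul_integral_integral_le htb ha hah ha0 hc) hlam

theorem stmt5_general (τ T t₃ κ₃ κT γ₃ lam : ℝ) (a g x y : ℝ → ℝ)
    (hκκ : κ₃ < κT)
    (ht₃ : t₃ ∈ Ioo τ T)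
    (ha0 : ∀ t ∈ Icc τ T, 0 ≤ a t)
    (haint : IntegrableOn a (Icc τ T))
    (hgcont : Continuous g) (hgnn : ∀ s, 0 ≤ g s)
    (hgmin : 0 < sInf (g '' Icc κ₃ κT))
    (hIpos : 0 < ∫ t in t₃..T, (∫ s in t..T, a s))
    (hγle : γ₃ ≤ (κT - κ₃) / (T - t₃))
    (hlam : lam >
      (κT - κ₃) / (sInf (g '' Icc κ₃ κT) * ∫ t in t₃..T, (∫ s in t..T, a s)))
    (hcx : ContinuousOn x (Icc τ T)) (hcy : ContinuousOn y (Icc τ T))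
    (hx : ∀ t ∈ Icc τ T, x t = x T + ∫ s in T..t, y s)
    (hy : ∀ t ∈ Icc τ T, y t = y T - lam * ∫ s in T..t, a s * g (x s))
    (hxT : x T = κT) (hyT : y T = 0) :
    x t₃ < κ₃ ∧ γ₃ < y t₃ := by
  obtain ⟨hτt₃, ht₃T⟩ := ht₃
  have hsub : Icc t₃ T ⊆ Icc τ T := Icc_subset_Icc_left hτt₃.le
  have ht₃ : t₃ ∈ Icc t₃ T := left_mem_Icc.2 ht₃T.le
  have hT : T ∈ Icc t₃ T := right_mem_Icc.2 ht₃T.le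
  have hlam0 : 0 < lam := (div_pos (sub_pos.2 hκκ) (mul_pos hgmin hIpos)).trans hlam
  have ha : IntegrableOn a (Icc t₃ T) := haint.mono_set hsub
  have hagx : IntegrableOn (fun s => a s * g (x s)) (Icc t₃ T) :=
    ha.mul_continuousOn (hgcont.comp_continuousOn (hcx.mono hsub)) isCompact_Icc
  have hyf : ∀ t ∈ Icc t₃ T, y t = lam * ∫ s in t..T, a s * g (x s) := fun t ht => by
    rw [hy t (hsub ht), hyT, integral_symm]
    ring
  have hxy : ∀ t ∈ Icc t₃ T, x t = κT - ∫ s in t..T, y s := fun t ht => by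
    rw [hx t (hsub ht), hxT, integral_symm, sub_eq_add_neg]
  have hy_anti : AntitoneOn y (Icc t₃ T) := antitoneOn_of_eq_mul_integral hlam0.le hagx
    (fun u hu => mul_nonneg (ha0 u (hsub hu)) (hgnn _)) hyf
  have hx_mono : MonotoneOn x (Icc t₃ T) := monotoneOn_of_eq_sub_integral
    (hcy.mono hsub).integrableOn_Icc (fun u hu => hyT ▸ hy_anti hu hT hu.2) hxy
  have hx₃ : x t₃ < κ₃ := by
    by_contra! h
    have hgx : ∀ t ∈ Icc t₃ T, sInf (g '' Icc κ₃ κT) ≤ g (x t) := fun t ht =>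
      csInf_le ⟨0, forall_mem_image.2 fun s _ => hgnn s⟩
        (mem_image_of_mem g (Icc_subset_Icc h hxT.le (hx_mono.mapsTo_Icc ht)))
    have hlow := mul_integral_integral_le_integral ht₃T.le ha hagx
      (fun t ht => ha0 t (hsub ht)) hgx hlam0.le hyf
    rw [gt_iff_lt, div_lt_iff₀ (mul_pos hgmin hIpos)] at hlam
    linarith [hxy t₃ ht₃]
  have hTt₃ : 0 < T - t₃ := sub_pos.2 ht₃T
  refine ⟨hx₃, lt_of_mul_lt_mul_left ?_ hTt₃.le⟩
  rw [le_div_iff₀ hTt₃] at hγle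
  linarith [hxy t₃ ht₃, hy_anti.integral_le_sub_mul ht₃T.le]

/-- Lemma 2.5: for `λ > λ** = (κ_T-κ₃)/(g₊(κ₃,κ_T) ∫_{t₃}^T A⁺(ξ,T) dξ)` and
`0 < γ₃ ≤ (κ_T-κ₃)/(T-t₃)`, the solution of `x' = y, y' = -λ a⁺(t) g(x)` with
terminal data `x(T) = κ_T`, `y(T) = 0` satisfies `x(t₃) < κ₃` and `y(t₃) > γ₃`. -/
theorem stmt5 (τ T t₃ κ₃ κT γ₃ lam : ℝ) (a g x y : ℝ → ℝ)
    (hκ₃ : 0 < κ₃) (hκκ : κ₃ < κT) (hκT : κT < 1)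
    (ht₃ : t₃ ∈ Ioo τ T)
    (ha0 : ∀ t ∈ Icc τ T, 0 ≤ a t)
    (haint : IntegrableOn a (Icc τ T))
    (hApos : ∀ t ∈ Ico τ T, 0 < ∫ s in t..T, a s)
    (hgcont : Continuous g) (hgnn : ∀ s, 0 ≤ g s)
    (hg0 : g 0 = 0) (hg1 : g 1 = 0) (hgpos : ∀ s : ℝ, 0 < s → s < 1 → 0 < g s)
    (hgmin : 0 < sInf (g '' Icc κ₃ κT))
    (hIpos : 0 < ∫ t in t₃..T, (∫ s in t..T, a s))
    (hγpos : 0 < γ₃) (hγle : γ₃ ≤ (κT - κ₃) / (T - t₃))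
    (hlam : lam >
      (κT - κ₃) / (sInf (g '' Icc κ₃ κT) * ∫ t in t₃..T, (∫ s in t..T, a s)))
    (hcx : ContinuousOn x (Icc τ T)) (hcy : ContinuousOn y (Icc τ T))
    (hx : ∀ t ∈ Icc τ T, x t = x T + ∫ s in T..t, y s)
    (hy : ∀ t ∈ Icc τ T, y t = y T - lam * ∫ s in T..t, a s * g (x s))
    (hxT : x T = κT) (hyT : y T = 0) :
    x t₃ < κ₃ ∧ γ₃ < y t₃ :=
  stmt5_general τ T t₃ κ₃ κT γ₃ lam a g x y hκκ ht₃ ha0 haint hgcont hgnn hgmin hIpos hγle hlam hcx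
    hcy hx hy hxT hyT
end

section
/- Let 0 < κ_σ < κ₂ < 1 and ω_σ > 0. Let σ < t₂ ≤ min{σ + κ_σ/(2ω_σ), τ} and 0 < ω ≤ (κ₂ - κ_σ)/(t₂ - σ). Define μ* := (κ₂ - κ_σ + (t₂ - σ)ω_σ)/(g₊(κ_σ/2, κ₂) ∫_σ^{t₂} A⁻(σ,ξ)dξ), where A⁻(σ,t) := ∫_σ^t a⁻(ξ)dξ > 0 for t ∈ (σ,τ] and g₊(κ_σ/2,κ₂) := min_{s∈[κ_σ/2,κ₂]} g(s) > 0. Then for every μ > μ*, any solution (x,y) of x' = y, y' = μ a⁻(t) g(x) on [σ,τ] with x(σ) = κ_σ and y(σ) ≥ -ω_σ satisfies x(t₂) > κ₂ and y(t₂) > ω. -/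
/-!
Since `y' = μ a⁻ g(x) ≥ 0`, `y` is nondecreasing and `x` is convex on `[σ, t₂]`. As long as
`t - σ ≤ κ_σ / (2 ω_σ)`, the initial velocity `y σ ≥ -ω_σ` cannot pull `x` below `κ_σ / 2`.
If `x t₂ ≤ κ₂`, convexity keeps `x` inside `[κ_σ / 2, κ₂]`, so `g(x) ≥ g₊`, and integrating twice
gives `x t₂ ≥ κ_σ - (t₂ - σ) ω_σ + μ g₊ ∫∫ a⁻ > κ₂`. Finally, monotonicity of `y` gives
`(t₂ - σ) y t₂ ≥ x t₂ - κ_σ > κ₂ - κ_σ ≥ (t₂ - σ) ω`.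
-/

open MeasureTheory Set

namespace MonotoneOn

variable {f : ℝ → ℝ} {a b : ℝ}

theorem mul_sub_le_intervalIntegral (hf : MonotoneOn f (Icc a b)) (hab : a ≤ b) :
    (b - a) * f a ≤ ∫ t in a..b, f t := by
  have hfi : IntervalIntegrable f volume a b := (uIcc_of_le hab ▸ hf).intervalIntegrable
  simpa using intervalIntegral.integral_mono_on hab intervalIntegrable_const hfi
    fun t ht => hf (left_mem_Icc.2 hab) ht ht.1

theorem intervalIntegral_le_mul_sub (hf : MonotoneOn f (Icc a b)) (hab : a ≤ b) :
    ∫ t in a..b, f t ≤ (b - a) * f b := by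
  have hfi : IntervalIntegrable f volume a b := (uIcc_of_le hab ▸ hf).intervalIntegrable
  simpa using intervalIntegral.integral_mono_on hab hfi intervalIntegrable_const
    fun t ht => hf ht (right_mem_Icc.2 hab) ht.2

theorem convexOn_of_eq_add_intervalIntegral {F : ℝ → ℝ} (hf : MonotoneOn f (Icc a b))
    (hF : ∀ t ∈ Icc a b, F t = F a + ∫ s in a..t, f s) : ConvexOn ℝ (Icc a b) F := by
  have hsub : ∀ {s t}, s ∈ Icc a b → t ∈ Icc a b → s ≤ t → F t - F s = ∫ r in s..t, f r := by
    intro s t hs ht hst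
    have hint : ∀ {r}, r ∈ Icc a b → IntervalIntegrable f volume a r := fun hr =>
      (hf.mono (uIcc_of_le hr.1 ▸ Icc_subset_Icc le_rfl hr.2)).intervalIntegrable
    rw [hF t ht, hF s hs, add_sub_add_left_eq_sub,
      intervalIntegral.integral_interval_sub_left (hint ht) (hint hs)]
  refine convexOn_of_slope_mono_adjacent (convex_Icc a b) fun {x y z} hx hz hxy hyz => ?_
  have hy : y ∈ Icc a b := ⟨hx.1.trans hxy.le, hyz.le.trans hz.2⟩
  calc (F y - F x) / (y - x) ≤ f y := by
        rw [div_le_iff₀ (sub_pos.2 hxy), hsub hx hy hxy.le, mul_comm]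
        exact (hf.mono (Icc_subset_Icc hx.1 hy.2)).intervalIntegral_le_mul_sub hxy.le
    _ ≤ (F z - F y) / (z - y) := by
        rw [le_div_iff₀ (sub_pos.2 hyz), hsub hy hz hyz.le, mul_comm]
        exact (hf.mono (Icc_subset_Icc hy.1 hz.2)).mul_sub_le_intervalIntegral hyz.le

end MonotoneOn

theorem monotoneOn_intervalIntegral_of_nonneg {w : ℝ → ℝ} {a b : ℝ}
    (hw : IntegrableOn w (Icc a b)) (hw0 : ∀ t ∈ Icc a b, 0 ≤ w t) :
    MonotoneOn (fun t => ∫ s in a..t, w s) (Icc a b) := by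
  intro s hs t ht hst
  have hwi : IntervalIntegrable w volume a t :=
    (hw.mono_set (uIcc_of_le ht.1 ▸ Icc_subset_Icc le_rfl ht.2)).intervalIntegrable
  refine intervalIntegral.integral_mono_interval le_rfl hs.1 hst ?_ hwi
  filter_upwards [ae_restrict_mem measurableSet_Ioc] with r hr
  exact hw0 r ⟨hr.1.le, hr.2.trans ht.2⟩

theorem mul_intervalIntegral_le_of_le {a h : ℝ → ℝ} {u v m : ℝ} (huv : u ≤ v)
    (ha : IntervalIntegrable a volume u v) (hah : IntervalIntegrable (fun s => a s * h s) volume u v)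
    (ha0 : ∀ s ∈ Icc u v, 0 ≤ a s) (hm : ∀ s ∈ Icc u v, m ≤ h s) :
    m * ∫ s in u..v, a s ≤ ∫ s in u..v, a s * h s := by
  rw [← intervalIntegral.integral_const_mul]
  refine intervalIntegral.integral_mono_on huv (ha.const_mul m) hah fun s hs => ?_
  rw [mul_comm]
  exact mul_le_mul_of_nonneg_left (hm s hs) (ha0 s hs)

theorem monotoneOn_of_eq_add_const_mul_intervalIntegral {y w : ℝ → ℝ} {a b c : ℝ} (hc : 0 ≤ c)
    (hw : IntegrableOn w (Icc a b)) (hw0 : ∀ t ∈ Icc a b, 0 ≤ w t)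
    (hy : ∀ t ∈ Icc a b, y t = y a + c * ∫ s in a..t, w s) : MonotoneOn y (Icc a b) := by
  intro s hs t ht hst
  rw [hy s hs, hy t ht]
  gcongr
  exact monotoneOn_intervalIntegral_of_nonneg hw hw0 hs ht hst

/-- Integrating `y' = μ a h ≥ μ a m` twice. -/
theorem le_position_of_acceleration_ge {a h x y : ℝ → ℝ} {σ t μ m : ℝ} (hσt : σ ≤ t)
    (hμ : 0 ≤ μ) (ha : IntegrableOn a (Icc σ t)) (ha0 : ∀ s ∈ Icc σ t, 0 ≤ a s)
    (hah : IntegrableOn (fun s => a s * h s) (Icc σ t)) (hm : ∀ s ∈ Icc σ t, m ≤ h s)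
    (hyi : IntervalIntegrable y volume σ t)
    (hx : x t = x σ + ∫ s in σ..t, y s)
    (hy : ∀ s ∈ Icc σ t, y s = y σ + μ * ∫ r in σ..s, a r * h r) :
    x σ + (t - σ) * y σ + μ * (m * ∫ s in σ..t, ∫ r in σ..s, a r) ≤ x t := by
  have hylow : ∀ s ∈ Icc σ t, y σ + μ * (m * ∫ r in σ..s, a r) ≤ y s := by
    intro s hs
    have hsub : Icc σ s ⊆ Icc σ t := Icc_subset_Icc_right hs.2
    have := mul_intervalIntegral_le_of_le hs.1
      ((intervalIntegrable_iff_integrableOn_Icc_of_le hs.1).2 (ha.mono_set hsub))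
      ((intervalIntegrable_iff_integrableOn_Icc_of_le hs.1).2 (hah.mono_set hsub))
      (fun r hr => ha0 r (hsub hr)) (fun r hr => hm r (hsub hr))
    rw [hy s hs]
    gcongr
  have hAi : IntervalIntegrable (fun s => ∫ r in σ..s, a r) volume σ t := by
    rw [← uIcc_of_le hσt] at ha
    exact (intervalIntegral.continuousOn_primitive_interval ha).intervalIntegrable
  have hforce : IntervalIntegrable (fun s => μ * (m * ∫ r in σ..s, a r)) volume σ t :=
    (hAi.const_mul m).const_mul μ
  have hint : ∫ s in σ..t, (y σ + μ * (m * ∫ r in σ..s, a r)) ≤ ∫ s in σ..t, y s :=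
    intervalIntegral.integral_mono_on hσt (intervalIntegrable_const.add hforce) hyi hylow
  rw [intervalIntegral.integral_add intervalIntegrable_const hforce,
    intervalIntegral.integral_const_mul, intervalIntegral.integral_const_mul,
    intervalIntegral.integral_const, smul_eq_mul] at hint
  linarith

theorem stmt7_general (σ τ t₂ κσ κ₂ ωσ ω μ : ℝ) (a g x y : ℝ → ℝ)
    (hκκ : κσ < κ₂) (hωσ : 0 < ωσ)
    (ht₂l : σ < t₂) (ht₂u : t₂ ≤ min (σ + κσ / (2 * ωσ)) τ)
    (hωle : ω ≤ (κ₂ - κσ) / (t₂ - σ))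
    (ha0 : ∀ t ∈ Icc σ τ, 0 ≤ a t)
    (haint : IntegrableOn a (Icc σ τ))
    (hgcont : Continuous g) (hgnn : ∀ s, 0 ≤ g s)
    (hgmin : 0 < sInf (g '' Icc (κσ / 2) κ₂))
    (hIpos : 0 < ∫ t in σ..t₂, (∫ s in σ..t, a s))
    (hμ : μ >
      (κ₂ - κσ + (t₂ - σ) * ωσ) / (sInf (g '' Icc (κσ / 2) κ₂) * ∫ t in σ..t₂, (∫ s in σ..t, a s)))
    (hcx : ContinuousOn x (Icc σ τ))
    (hx : ∀ t ∈ Icc σ τ, x t = x σ + ∫ s in σ..t, y s)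
    (hy : ∀ t ∈ Icc σ τ, y t = y σ + μ * ∫ s in σ..t, a s * g (x s))
    (hxσ : x σ = κσ) (hyσ : -ωσ ≤ y σ) :
    κ₂ < x t₂ ∧ ω < y t₂ := by
  obtain ⟨ht₂κ, ht₂τ⟩ := le_min_iff.mp ht₂u
  set gp := sInf (g '' Icc (κσ / 2) κ₂)
  have hJ : Icc σ t₂ ⊆ Icc σ τ := Icc_subset_Icc le_rfl ht₂τ
  have hμ' : κ₂ - κσ + (t₂ - σ) * ωσ < μ * (gp * ∫ t in σ..t₂, ∫ s in σ..t, a s) := by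
    rwa [gt_iff_lt, div_lt_iff₀ (mul_pos hgmin hIpos)] at hμ
  have hμ0 : 0 ≤ μ := by nlinarith [mul_pos hgmin hIpos]
  have hax : IntegrableOn (fun s => a s * g (x s)) (Icc σ t₂) :=
    (haint.mono_set hJ).mul_continuousOn (hgcont.comp_continuousOn (hcx.mono hJ)) isCompact_Icc
  have hxJ : ∀ t ∈ Icc σ t₂, x t = x σ + ∫ s in σ..t, y s := fun t ht => hx t (hJ ht)
  have hymono : MonotoneOn y (Icc σ t₂) :=
    monotoneOn_of_eq_add_const_mul_intervalIntegral hμ0 hax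
      (fun t ht => mul_nonneg (ha0 t (hJ ht)) (hgnn _)) fun t ht => hy t (hJ ht)
  have hxlow : ∀ t ∈ Icc σ t₂, κσ / 2 ≤ x t := by
    intro t ht
    have hyint := (hymono.mono (Icc_subset_Icc_right ht.2)).mul_sub_le_intervalIntegral ht.1
    have hdrift : (t - σ) * ωσ ≤ κσ / 2 := by
      rw [← le_div_iff₀ hωσ, div_div]
      linarith [ht.2]
    nlinarith [hxJ t ht, ht.1]
  have hx₂ := hxJ t₂ (right_mem_Icc.2 ht₂l.le)
  have hxt₂ : κ₂ < x t₂ := by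
    by_contra! hle
    have hxκ₂ : ∀ t ∈ Icc σ t₂, x t ≤ κ₂ := fun t ht =>
      ((hymono.convexOn_of_eq_add_intervalIntegral hxJ).le_max_of_mem_Icc
        (left_mem_Icc.2 ht₂l.le) (right_mem_Icc.2 ht₂l.le) ht).trans
        (max_le (hxσ.trans_le hκκ.le) hle)
    have hg : ∀ t ∈ Icc σ t₂, gp ≤ g (x t) := fun t ht =>
      csInf_le ⟨0, by rintro _ ⟨s, -, rfl⟩; exact hgnn s⟩ ⟨x t, ⟨hxlow t ht, hxκ₂ t ht⟩, rfl⟩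
    have := le_position_of_acceleration_ge ht₂l.le hμ0 (haint.mono_set hJ)
      (fun t ht => ha0 t (hJ ht)) hax hg
      (MonotoneOn.intervalIntegrable (uIcc_of_le ht₂l.le ▸ hymono)) hx₂ fun t ht => hy t (hJ ht)
    nlinarith
  refine ⟨hxt₂, ?_⟩
  have hyint := hymono.intervalIntegral_le_mul_sub ht₂l.le
  rw [le_div_iff₀ (sub_pos.2 ht₂l)] at hωle
  nlinarith

/-- Lemma 2.7: for `μ > μ* = (κ₂-κ_σ+(t₂-σ)ω_σ)/(g₊(κ_σ/2,κ₂) ∫_σ^{t₂} A⁻(σ,ξ)dξ)`,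
any solution of `x' = y, y' = μ a⁻(t) g(x)` on `[σ,τ]` with `x(σ) = κ_σ`,
`y(σ) ≥ -ω_σ` satisfies `x(t₂) > κ₂` and `y(t₂) > ω`. -/
theorem stmt7 (σ τ t₂ κσ κ₂ ωσ ω μ : ℝ) (a g x y : ℝ → ℝ)
    (hκσ : 0 < κσ) (hκκ : κσ < κ₂) (hκ₂ : κ₂ < 1) (hωσ : 0 < ωσ)
    (hστ : σ < τ)
    (ht₂l : σ < t₂) (ht₂u : t₂ ≤ min (σ + κσ / (2 * ωσ)) τ)
    (hωpos : 0 < ω) (hωle : ω ≤ (κ₂ - κσ) / (t₂ - σ))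
    (ha0 : ∀ t ∈ Icc σ τ, 0 ≤ a t)
    (haint : IntegrableOn a (Icc σ τ))
    (hApos : ∀ t ∈ Ioc σ τ, 0 < ∫ s in σ..t, a s)
    (hgcont : Continuous g) (hgnn : ∀ s, 0 ≤ g s)
    (hg0 : g 0 = 0) (hg1 : g 1 = 0) (hgpos : ∀ s : ℝ, 0 < s → s < 1 → 0 < g s)
    (hgmin : 0 < sInf (g '' Icc (κσ / 2) κ₂))
    (hIpos : 0 < ∫ t in σ..t₂, (∫ s in σ..t, a s))
    (hμ : μ >
      (κ₂ - κσ + (t₂ - σ) * ωσ) / (sInf (g '' Icc (κσ / 2) κ₂) * ∫ t in σ..t₂, (∫ s in σ..t, a s)))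
    (hcx : ContinuousOn x (Icc σ τ)) (hcy : ContinuousOn y (Icc σ τ))
    (hx : ∀ t ∈ Icc σ τ, x t = x σ + ∫ s in σ..t, y s)
    (hy : ∀ t ∈ Icc σ τ, y t = y σ + μ * ∫ s in σ..t, a s * g (x s))
    (hxσ : x σ = κσ) (hyσ : -ωσ ≤ y σ) :
    κ₂ < x t₂ ∧ ω < y t₂ :=
  stmt7_general σ τ t₂ κσ κ₂ ωσ ω μ a g x y hκκ hωσ ht₂l ht₂u hωle ha0 haint hgcont hgnn hgmin hIpos
    hμ hcx hx hy hxσ hyσ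
end

section
/- Let λ > 0, let 0 ≤ a⁺ ∈ L^∞(0,σ), and let g : ℝ → ℝ⁺ be continuous with g(s) ≤ εs for all s ∈ [0,δ] (some ε, δ > 0) and g = 0 for s ≤ 0. Suppose (x,y) solves x' = y, y' = -λ a⁺(t)g(x) on [0,σ] with x(0) = κ ∈ (0,δ], y(0) = 0, and x(t) > 0 on [0,σ]. Writing (x,y) = (ρ cos θ, ρ sin θ) with θ(0) = 0, the angular coordinate satisfies θ(t) ∈ [-π/2, 0] and |θ(t)| ≤ arctan(√(λ‖a⁺‖_∞ ε) · tan(σ√(λ‖a⁺‖_∞ ε))) for all t ∈ [0,σ], provided σ√(λ‖a⁺‖_∞ε) < π/2. -/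
open MeasureTheory Set Real

/-!
Put `c = √(λ M ε)`. The function `E = c x sin (c t) + y cos (c t)`, the Wronskian of `(x, y)`
against the comparison solution `cos (c t)` of `u'' = -c² u`, is absolutely continuous with
`E 0 = 0` and `E' = (c² x - λ a g(x)) cos (c t) ≥ 0` a.e., because `y ≤ 0` keeps `x` in `(0, κ]`
where `g(x) ≤ ε x`. Hence `-y ≤ c tan (c t) x ≤ c tan (σ c) x`. As `x > 0`, the continuous angle
`θ` never reaches `±π/2`, so `θ = arctan (y / x) ∈ [-arctan (c tan (σ c)), 0]`.
-/

theorem AbsolutelyContinuousOnInterval.le_of_ae_hasDerivAt_nonneg {f f' : ℝ → ℝ} {a b : ℝ}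
    (hab : a ≤ b) (hf : AbsolutelyContinuousOnInterval f a b)
    (hf' : ∀ᵐ x, x ∈ Icc a b → HasDerivAt f (f' x) x ∧ 0 ≤ f' x) : f a ≤ f b := by
  rw [← sub_nonneg, ← hf.integral_deriv_eq_sub]
  refine intervalIntegral.integral_nonneg_of_ae_restrict hab ?_
  rw [Filter.EventuallyLE, ae_restrict_iff' measurableSet_Icc]
  filter_upwards [hf'] with x hx hxI
  obtain ⟨hd, hnn⟩ := hx hxI
  simpa [hd.deriv] using hnn

theorem IsPreconnected.mapsTo_Ioo_of_cos_ne_zero {s : Set ℝ} {θ : ℝ → ℝ}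
    (hs : IsPreconnected s) (hθ : ContinuousOn θ s) {a : ℝ} (ha : a ∈ s)
    (hθa : θ a ∈ Ioo (-(π / 2)) (π / 2)) (hcos : ∀ t ∈ s, cos (θ t) ≠ 0) :
    MapsTo θ s (Ioo (-(π / 2)) (π / 2)) := by
  have himage := hs.image θ hθ
  intro t ht
  by_contra hout
  rw [mem_Ioo, not_and_or, not_lt, not_lt] at hout
  rcases hout with hlow | hhigh
  · obtain ⟨u, hu, hθu⟩ := himage.Icc_subset (mem_image_of_mem θ ht) (mem_image_of_mem θ ha)
      ⟨hlow, hθa.1.le⟩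
    exact hcos u hu (by rw [hθu, cos_neg, cos_pi_div_two])
  · obtain ⟨u, hu, hθu⟩ := himage.Icc_subset (mem_image_of_mem θ ha) (mem_image_of_mem θ ht)
      ⟨hθa.2.le, hhigh⟩
    exact hcos u hu (by rw [hθu, cos_pi_div_two])

theorem mem_Icc_neg_arctan_of_tan_mem {θ B : ℝ} (hθ : θ ∈ Ioo (-(π / 2)) (π / 2))
    (htan : tan θ ∈ Icc (-B) 0) : θ ∈ Icc (-arctan B) 0 := by
  rw [← arctan_tan hθ.1 hθ.2, ← arctan_zero, ← arctan_neg]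
  exact ⟨arctan_mono htan.1, arctan_mono htan.2⟩

theorem sturm_comparison_cos {h X Y : ℝ → ℝ} {c κ t : ℝ} (hc : 0 ≤ c) (ht : 0 ≤ t)
    (hct : c * t ≤ π / 2) (hh : IntervalIntegrable h volume 0 t)
    (hY : ∀ s ∈ Icc 0 t, Y s = -∫ r in 0..s, h r)
    (hX : ∀ s ∈ Icc 0 t, X s = κ + ∫ r in 0..s, Y r)
    (hhX : ∀ᵐ s, s ∈ Icc 0 t → h s ≤ c ^ 2 * X s) :
    0 ≤ c * X t * sin (c * t) + Y t * cos (c * t) := by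
  -- `X` and `Y` are only pinned down on `[0, t]`; differentiate these global versions instead.
  set Y₀ : ℝ → ℝ := fun s => -∫ r in 0..s, h r
  set X₀ : ℝ → ℝ := fun s => κ + ∫ r in 0..s, Y₀ r
  have hY₀ : IntervalIntegrable Y₀ volume 0 t :=
    (intervalIntegral.continuousOn_primitive_interval' hh left_mem_uIcc).neg.intervalIntegrable
  have hXX₀ : ∀ s ∈ Icc 0 t, X s = X₀ s := fun s hs => by
    rw [hX s hs]
    congr 1
    refine intervalIntegral.integral_congr fun r hr => hY r ?_
    rw [uIcc_of_le hs.1] at hr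
    exact ⟨hr.1, hr.2.trans hs.2⟩
  set E : ℝ → ℝ := fun s => c * X₀ s * sin (c * s) + Y₀ s * cos (c * s)
  have hE : AbsolutelyContinuousOnInterval E 0 t := by
    have hsin : AbsolutelyContinuousOnInterval (fun s => sin (c * s)) 0 t :=
      ContDiffOn.absolutelyContinuousOnInterval (by fun_prop)
    have hcos : AbsolutelyContinuousOnInterval (fun s => cos (c * s)) 0 t :=
      ContDiffOn.absolutelyContinuousOnInterval (by fun_prop)
    have hX₀ : AbsolutelyContinuousOnInterval X₀ 0 t :=
      (ContDiffOn.absolutelyContinuousOnInterval contDiffOn_const).add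
        (hY₀.absolutelyContinuousOnInterval_intervalIntegral left_mem_uIcc)
    exact ((hX₀.const_mul c).fun_mul hsin).add
      ((hh.absolutelyContinuousOnInterval_intervalIntegral left_mem_uIcc).neg.fun_mul hcos)
  have hmono := hE.le_of_ae_hasDerivAt_nonneg ht
    (f' := fun s => (c ^ 2 * X₀ s - h s) * cos (c * s)) ?_
  · simpa [E, Y₀, hXX₀ t ⟨ht, le_rfl⟩, hY t ⟨ht, le_rfl⟩] using hmono
  filter_upwards [hh.ae_hasDerivAt_integral, hY₀.ae_hasDerivAt_integral, hhX]
    with s hhs hYs hXs hs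
  have hs' : s ∈ uIcc 0 t := by rwa [uIcc_of_le ht]
  have hdY : HasDerivAt Y₀ (-h s) s := (hhs hs' 0 left_mem_uIcc).neg
  have hdX : HasDerivAt X₀ (Y₀ s) s := (hYs hs' 0 left_mem_uIcc).const_add κ
  have hlin : HasDerivAt (fun s => c * s) c s := by simpa using (hasDerivAt_id s).const_mul c
  have hdE : HasDerivAt E _ s := ((hdX.const_mul c).mul hlin.sin).add (hdY.mul hlin.cos)
  refine ⟨hdE.congr_deriv (by ring), mul_nonneg ?_ ?_⟩
  · rw [sub_nonneg, ← hXX₀ s hs]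
    exact hXs hs
  · exact cos_nonneg_of_mem_Icc ⟨by nlinarith [pi_pos, hs.1], by nlinarith [hs.2]⟩

theorem sturm_comparison_tan {h X Y : ℝ → ℝ} {c κ t : ℝ} (hc : 0 ≤ c) (ht : 0 ≤ t)
    (hct : c * t < π / 2) (hh : IntervalIntegrable h volume 0 t)
    (hY : ∀ s ∈ Icc 0 t, Y s = -∫ r in 0..s, h r)
    (hX : ∀ s ∈ Icc 0 t, X s = κ + ∫ r in 0..s, Y r)
    (hhX : ∀ᵐ s, s ∈ Icc 0 t → h s ≤ c ^ 2 * X s) :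
    -Y t ≤ c * tan (c * t) * X t := by
  have hcos : 0 < cos (c * t) := cos_pos_of_mem_Ioo ⟨by nlinarith [pi_pos], hct⟩
  have := sturm_comparison_cos hc ht hct.le hh hY hX hhX
  rw [tan_eq_sin_div_cos, ← mul_le_mul_iff_left₀ hcos]
  field_simp
  linarith

theorem velocity_mem_Icc_of_force_le_linear {a g x y : ℝ → ℝ} {σ lam ε δ κ M : ℝ}
    (hσ : 0 ≤ σ) (hlam : 0 ≤ lam) (hε : 0 ≤ ε)
    (ha0 : ∀ t ∈ Icc 0 σ, 0 ≤ a t) (haM : ∀ t ∈ Icc 0 σ, a t ≤ M)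
    (haint : IntegrableOn a (Icc 0 σ)) (hgcont : Continuous g) (hgnn : ∀ s, 0 ≤ g s)
    (hgε : ∀ s ∈ Icc 0 δ, g s ≤ ε * s) (hκδ : κ ≤ δ) (hcx : ContinuousOn x (Icc 0 σ))
    (hx : ∀ t ∈ Icc 0 σ, x t = κ + ∫ s in 0..t, y s)
    (hy : ∀ t ∈ Icc 0 σ, y t = -lam * ∫ s in 0..t, a s * g (x s))
    (hxpos : ∀ t ∈ Icc 0 σ, 0 < x t) (hsmall : σ * √(lam * M * ε) < π / 2) :
    ∀ t ∈ Icc 0 σ, y t ∈ Icc (-(√(lam * M * ε) * tan (σ * √(lam * M * ε)) * x t)) 0 := by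
  have hM : 0 ≤ M := (ha0 0 ⟨le_rfl, hσ⟩).trans (haM 0 ⟨le_rfl, hσ⟩)
  set c := √(lam * M * ε) with hc
  have hc0 : 0 ≤ c := sqrt_nonneg _
  set h : ℝ → ℝ := fun s => lam * (a s * g (x s))
  have hIcc : ∀ t ∈ Icc 0 σ, Icc 0 t ⊆ Icc 0 σ := fun t ht => Icc_subset_Icc le_rfl ht.2
  have hh : IntegrableOn h (Icc 0 σ) :=
    (haint.mul_continuousOn (hgcont.comp_continuousOn hcx) isCompact_Icc).const_mul lam
  have hy' : ∀ t ∈ Icc 0 σ, y t = -∫ s in 0..t, h s := fun t ht => by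
    rw [hy t ht, intervalIntegral.integral_const_mul]; ring
  have hy_nonpos : ∀ t ∈ Icc 0 σ, y t ≤ 0 := fun t ht => by
    rw [hy' t ht, neg_nonpos]
    exact intervalIntegral.integral_nonneg ht.1 fun s hs =>
      mul_nonneg hlam (mul_nonneg (ha0 s (hIcc t ht hs)) (hgnn _))
  have hx_le : ∀ t ∈ Icc 0 σ, x t ≤ κ := fun t ht => by
    have : 0 ≤ ∫ s in 0..t, -y s :=
      intervalIntegral.integral_nonneg ht.1 fun s hs => neg_nonneg.2 (hy_nonpos s (hIcc t ht hs))
    rw [intervalIntegral.integral_neg] at this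
    linarith [hx t ht]
  have hhx : ∀ t ∈ Icc 0 σ, h t ≤ c ^ 2 * x t := fun t ht => by
    have hg := hgε _ ⟨(hxpos t ht).le, (hx_le t ht).trans hκδ⟩
    rw [hc, sq_sqrt (by positivity)]
    nlinarith [mul_le_mul (haM t ht) hg (hgnn _) hM]
  intro t ht
  have hct : c * t ≤ σ * c := by nlinarith [ht.2]
  have hsturm := sturm_comparison_tan hc0 ht.1 (hct.trans_lt hsmall)
    ((intervalIntegrable_iff_integrableOn_Icc_of_le ht.1).2 (hh.mono_set (hIcc t ht)))
    (fun s hs => hy' s (hIcc t ht hs)) (fun s hs => hx s (hIcc t ht hs))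
    (ae_of_all _ fun s hs => hhx s (hIcc t ht hs))
  have htan_mono : tan (c * t) ≤ tan (σ * c) :=
    strictMonoOn_tan.monotoneOn ⟨by nlinarith [pi_pos, ht.1], hct.trans_lt hsmall⟩
      ⟨by nlinarith [pi_pos, hσ], hsmall⟩ hct
  refine ⟨?_, hy_nonpos t ht⟩
  nlinarith [mul_le_mul_of_nonneg_left htan_mono (mul_nonneg hc0 (hxpos t ht).le)]

theorem polar_angle_mem_Icc_neg_arctan {x y ρ θ : ℝ → ℝ} {σ B : ℝ} (hσ : 0 ≤ σ)
    (hθcont : ContinuousOn θ (Icc 0 σ)) (hθ0 : θ 0 = 0)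
    (hpolar : ∀ t ∈ Icc 0 σ, 0 < ρ t ∧ x t = ρ t * cos (θ t) ∧ y t = ρ t * sin (θ t))
    (hxpos : ∀ t ∈ Icc 0 σ, 0 < x t) (hy : ∀ t ∈ Icc 0 σ, y t ∈ Icc (-(B * x t)) 0) :
    ∀ t ∈ Icc 0 σ, θ t ∈ Icc (-arctan B) 0 := by
  have hθ : MapsTo θ (Icc 0 σ) (Ioo (-(π / 2)) (π / 2)) :=
    isPreconnected_Icc.mapsTo_Ioo_of_cos_ne_zero hθcont (left_mem_Icc.2 hσ)
      (by simp [hθ0, pi_pos]) fun t ht => by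
        obtain ⟨hρ, hxt, -⟩ := hpolar t ht
        have := hxpos t ht
        rw [hxt] at this
        exact (pos_of_mul_pos_right this hρ.le).ne'
  intro t ht
  obtain ⟨hρ, hxt, hyt⟩ := hpolar t ht
  refine mem_Icc_neg_arctan_of_tan_mem (hθ ht) ?_
  rw [tan_eq_sin_div_cos, ← mul_div_mul_left _ _ hρ.ne', ← hxt, ← hyt,
    mem_Icc, le_div_iff₀ (hxpos t ht), div_nonpos_iff]
  exact ⟨neg_mul B (x t) ▸ (hy t ht).1, Or.inr ⟨(hy t ht).2, (hxpos t ht).le⟩⟩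

theorem stmt17_general (σ lam ε δ κ M : ℝ) (a g x y ρ θ : ℝ → ℝ)
    (hσ : 0 < σ) (hlam : 0 < lam) (hε : 0 < ε)
    (ha0 : ∀ t ∈ Icc 0 σ, 0 ≤ a t) (haM : ∀ t ∈ Icc 0 σ, a t ≤ M)
    (haint : IntegrableOn a (Icc 0 σ))
    (hgcont : Continuous g) (hgnn : ∀ s, 0 ≤ g s)
    (hgε : ∀ s ∈ Icc (0:ℝ) δ, g s ≤ ε * s)
    (hκ : κ ∈ Ioc 0 δ)
    (hcx : ContinuousOn x (Icc 0 σ))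
    (hx : ∀ t ∈ Icc 0 σ, x t = κ + ∫ s in (0:ℝ)..t, y s)
    (hy : ∀ t ∈ Icc 0 σ, y t = -lam * ∫ s in (0:ℝ)..t, a s * g (x s))
    (hxpos : ∀ t ∈ Icc 0 σ, 0 < x t)
    (hθcont : ContinuousOn θ (Icc 0 σ)) (hθ0 : θ 0 = 0)
    (hpolar : ∀ t ∈ Icc 0 σ,
      0 < ρ t ∧ x t = ρ t * Real.cos (θ t) ∧ y t = ρ t * Real.sin (θ t))
    (hsmall : σ * Real.sqrt (lam * M * ε) < Real.pi / 2) :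
    ∀ t ∈ Icc (0:ℝ) σ,
      θ t ∈ Icc (-(Real.pi / 2)) 0 ∧
      |θ t| ≤ Real.arctan (Real.sqrt (lam * M * ε) *
        Real.tan (σ * Real.sqrt (lam * M * ε))) := by
  have hvel := velocity_mem_Icc_of_force_le_linear hσ.le hlam.le hε.le ha0 haM haint hgcont
    hgnn hgε hκ.2 hcx hx hy hxpos hsmall
  intro t ht
  have hθ := polar_angle_mem_Icc_neg_arctan hσ.le hθcont hθ0 hpolar hxpos hvel t ht
  refine ⟨⟨(neg_lt_neg (arctan_lt_pi_div_two _)).le.trans hθ.1, hθ.2⟩, ?_⟩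
  rw [abs_of_nonpos hθ.2]
  linarith [hθ.1]

/-- Quantitative angular estimate (heart of Lemma 2.3): if `(x,y)` solves
`x' = y, y' = -λ a⁺(t) g(x)` on `[0,σ]` with `x(0) = κ ∈ (0,δ]`, `y(0) = 0`,
`x > 0` on `[0,σ]`, `0 ≤ a⁺ ≤ M`, `g(s) ≤ εs` on `[0,δ]`, `g = 0` for `s ≤ 0`,
then in polar coordinates `(x,y) = (ρ cos θ, ρ sin θ)` with `θ(0) = 0` one has
`θ(t) ∈ [-π/2,0]` and `|θ(t)| ≤ arctan(√(λMε) tan(σ√(λMε)))` on `[0,σ]`,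
provided `σ√(λMε) < π/2`. -/
theorem stmt17 (σ lam ε δ κ M : ℝ) (a g x y ρ θ : ℝ → ℝ)
    (hσ : 0 < σ) (hlam : 0 < lam) (hε : 0 < ε) (hδ : 0 < δ)
    (ha0 : ∀ t ∈ Icc 0 σ, 0 ≤ a t) (haM : ∀ t ∈ Icc 0 σ, a t ≤ M)
    (haint : IntegrableOn a (Icc 0 σ))
    (hgcont : Continuous g) (hgnn : ∀ s, 0 ≤ g s)
    (hgε : ∀ s ∈ Icc (0:ℝ) δ, g s ≤ ε * s)
    (hgneg : ∀ s : ℝ, s ≤ 0 → g s = 0)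
    (hκ : κ ∈ Ioc 0 δ)
    (hcx : ContinuousOn x (Icc 0 σ)) (hcy : ContinuousOn y (Icc 0 σ))
    (hx : ∀ t ∈ Icc 0 σ, x t = κ + ∫ s in (0:ℝ)..t, y s)
    (hy : ∀ t ∈ Icc 0 σ, y t = -lam * ∫ s in (0:ℝ)..t, a s * g (x s))
    (hxpos : ∀ t ∈ Icc 0 σ, 0 < x t)
    (hθcont : ContinuousOn θ (Icc 0 σ)) (hθ0 : θ 0 = 0)
    (hpolar : ∀ t ∈ Icc 0 σ,
      0 < ρ t ∧ x t = ρ t * Real.cos (θ t) ∧ y t = ρ t * Real.sin (θ t))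
    (hsmall : σ * Real.sqrt (lam * M * ε) < Real.pi / 2) :
    ∀ t ∈ Icc (0:ℝ) σ,
      θ t ∈ Icc (-(Real.pi / 2)) 0 ∧
      |θ t| ≤ Real.arctan (Real.sqrt (lam * M * ε) *
        Real.tan (σ * Real.sqrt (lam * M * ε))) :=
  stmt17_general σ lam ε δ κ M a g x y ρ θ hσ hlam hε ha0 haM haint hgcont hgnn hgε hκ hcx hx hy
    hxpos hθcont hθ0 hpolar hsmall
end
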